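/- Let (X, d) be a metric space with basepoint x₀, and define the pseudometric ρ on π₁(X, x₀) by ρ([ζ],[η]) = inf{ diam(ξ) : ξ a loop based at x₀ with [ξ] = [ζ⁻·η] }. Then the topology induced by ρ on π₁(X, x₀) coincides with the whisker topology; consequently, if X is metrizable then π₁^wh(X, x₀) is pseudometrizable. -/

import Mathlib

open Set TopologicalSpace

attribute [local instance] Path.Homotopic.setoid

universe u v

variable {X : Type u} [TopologicalSpace X]

/-- The basic whisker-topology set `B([ζ],U)`: all classes of the form `[ζ·η]`
where `η` is a loop based at `x₀` with image in `U`. -/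
def whiskerB {x₀ : X} (ζ : Path.Homotopic.Quotient x₀ x₀) (U : Set X) :
    Set (Path.Homotopic.Quotient x₀ x₀) :=
  {g | ∃ η : Path x₀ x₀, Set.range η ⊆ U ∧ g = Path.Homotopic.Quotient.trans ζ (Quotient.mk (Path.Homotopic.setoid x₀ x₀) η)}

/-- The whisker topology on `π₁(X, x₀)`, generated by the basic sets `B([ζ],U)`
for `U` an open neighborhood of `x₀`. -/
def whiskerTopology (x₀ : X) : TopologicalSpace (Path.Homotopic.Quotient x₀ x₀) :=
  TopologicalSpace.generateFrom
    {S | ∃ (ζ : Path.Homotopic.Quotient x₀ x₀) (U : Set X),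
      IsOpen U ∧ x₀ ∈ U ∧ S = whiskerB ζ U}

/-- Inversion `[ζ] ↦ [ζ⁻]` on `π₁(X, x₀)`. -/
def whiskerInv {x₀ : X} : Path.Homotopic.Quotient x₀ x₀ → Path.Homotopic.Quotient x₀ x₀ :=
  Quotient.map Path.symm (fun _ _ h => Nonempty.map Path.Homotopy.symm₂ h)

/-- `π₁^wh(X, x₀)` is a topological group: the multiplication `([ζ],[η]) ↦ [ζ·η]`
is jointly continuous and inversion `[ζ] ↦ [ζ⁻]` is continuous, with respect to
the whisker topology. -/
def IsWhiskerTopGroup (x₀ : X) : Prop :=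
  letI := whiskerTopology x₀
  Continuous (fun p : Path.Homotopic.Quotient x₀ x₀ × Path.Homotopic.Quotient x₀ x₀ =>
    Path.Homotopic.Quotient.trans p.1 p.2) ∧
  Continuous (whiskerInv (x₀ := x₀))

/-- The whisker pseudometric on `π₁(X, x₀)`:
`ρ([ζ],[η]) = inf { diam ξ : ξ a loop based at x₀ with [ξ] = [ζ⁻·η] }`. -/
noncomputable def whiskerDist {X : Type u} [MetricSpace X] {x₀ : X}
    (a b : Path.Homotopic.Quotient x₀ x₀) : ℝ :=
  sInf {r : ℝ | ∃ ξ : Path x₀ x₀,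
    Metric.diam (Set.range ⇑ξ) = r ∧ Path.Homotopic.Quotient.trans (whiskerInv a) b = Quotient.mk (Path.Homotopic.setoid x₀ x₀) ξ}


/-!
A loop `ξ` with `diam ξ < ε` stays in the `ε`-ball around `x₀`, so the `ρ`-ball of radius `ε`
around `[ζ]` lies in `B([ζ], ball x₀ ε)`; conversely every `[ζ·η]` in `B([ζ], ball x₀ (ε/3))` is
within `ρ`-distance `diam η ≤ 2ε/3 < ε` of `[ζ]`. So around each class, `ρ`-balls and basic
whisker sets are nested in both directions, and the two topologies agree. That `ρ` is a
pseudometric comes from reversing a witness loop (symmetry) and concatenating two witnesses,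
whose images both contain `x₀` (triangle inequality).
-/

open Topology

theorem Metric.topology_eq_generateFrom_dist_lt (α : Type v) [PseudoMetricSpace α] :
    ‹PseudoMetricSpace α›.toUniformSpace.toTopologicalSpace =
      generateFrom {S | ∃ (a : α) (ε : ℝ), 0 < ε ∧ S = {b | dist a b < ε}} := by
  have hball (a : α) (ε : ℝ) : {b | dist a b < ε} = Metric.ball a ε :=
    Set.ext fun _ => Metric.mem_ball'.symm
  refine (isTopologicalBasis_of_isOpen_of_nhds ?_ fun a s has hs => ?_).eq_generateFrom
  · rintro _ ⟨a, ε, -, rfl⟩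
    exact hball a ε ▸ Metric.isOpen_ball
  · obtain ⟨ε, hε, hεs⟩ := Metric.isOpen_iff.mp hs a has
    exact ⟨_, ⟨a, ε, hε, rfl⟩, by simpa using hε, hball a ε ▸ hεs⟩

section Loops

variable {x₀ : X}

theorem whiskerInv_trans_eq_iff {a b γ : Path.Homotopic.Quotient x₀ x₀} :
    (whiskerInv a).trans b = γ ↔ b = a.trans γ := by
  change a.symm.trans b = γ ↔ b = a.trans γ
  constructor <;> rintro rfl <;> simp [← Path.Homotopic.Quotient.trans_assoc]

theorem mem_whiskerB_self (b : Path.Homotopic.Quotient x₀ x₀) {U : Set X} (hU : x₀ ∈ U) :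
    b ∈ whiskerB b U :=
  ⟨Path.refl x₀, by simpa [Path.refl_range] using hU,
    (Path.Homotopic.Quotient.trans_refl b).symm⟩

theorem whiskerB_mono (b : Path.Homotopic.Quotient x₀ x₀) {U V : Set X} (hUV : U ⊆ V) :
    whiskerB b U ⊆ whiskerB b V := by
  rintro _ ⟨η, hη, rfl⟩
  exact ⟨η, hη.trans hUV, rfl⟩

theorem whiskerB_subset_of_mem {ζ b : Path.Homotopic.Quotient x₀ x₀} {U : Set X}
    (hb : b ∈ whiskerB ζ U) : whiskerB b U ⊆ whiskerB ζ U := by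
  obtain ⟨η, hη, rfl⟩ := hb
  rintro _ ⟨η', hη', rfl⟩
  exact ⟨η.trans η', by simpa [Path.trans_range] using And.intro hη hη',
    Path.Homotopic.Quotient.trans_assoc _ _ _⟩

theorem isOpen_whiskerB (ζ : Path.Homotopic.Quotient x₀ x₀) {U : Set X} (hU : IsOpen U)
    (hx₀ : x₀ ∈ U) : IsOpen[whiskerTopology x₀] (whiskerB ζ U) :=
  .basic _ ⟨ζ, U, hU, hx₀, rfl⟩

end Loops

section Metric

variable {Y : Type u} [MetricSpace Y] {y₀ : Y}

theorem whiskerDist_le_diam {a b : Path.Homotopic.Quotient y₀ y₀} {ξ : Path y₀ y₀}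
    (h : b = a.trans ⟦ξ⟧) : whiskerDist a b ≤ Metric.diam (range ξ) :=
  csInf_le ⟨0, by rintro r ⟨ξ, rfl, -⟩; exact Metric.diam_nonneg⟩
    ⟨ξ, rfl, whiskerInv_trans_eq_iff.mpr h⟩

theorem exists_diam_lt_of_whiskerDist_lt {a b : Path.Homotopic.Quotient y₀ y₀} {ε : ℝ}
    (h : whiskerDist a b < ε) :
    ∃ ξ : Path y₀ y₀, b = a.trans ⟦ξ⟧ ∧ Metric.diam (range ξ) < ε := by
  obtain ⟨ξ₀, hξ₀⟩ := Quotient.exists_rep ((whiskerInv a).trans b)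
  unfold whiskerDist at h
  obtain ⟨_, ⟨ξ, rfl, hξ⟩, hlt⟩ := exists_lt_of_csInf_lt (by exact ⟨_, ξ₀, rfl, hξ₀.symm⟩) h
  exact ⟨ξ, whiskerInv_trans_eq_iff.mp hξ, hlt⟩

theorem whiskerDist_self (a : Path.Homotopic.Quotient y₀ y₀) : whiskerDist a a = 0 := by
  refine le_antisymm ?_ (Real.sInf_nonneg (by rintro r ⟨ξ, rfl, -⟩; exact Metric.diam_nonneg))
  simpa [Path.refl_range] using
    whiskerDist_le_diam (Path.Homotopic.Quotient.trans_refl a).symm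

theorem whiskerDist_comm_le (a b : Path.Homotopic.Quotient y₀ y₀) :
    whiskerDist b a ≤ whiskerDist a b := by
  refine le_of_forall_pos_le_add fun θ hθ => ?_
  obtain ⟨ξ, rfl, hξ⟩ :=
    exists_diam_lt_of_whiskerDist_lt (lt_add_of_pos_right (whiskerDist a b) hθ)
  have hback : a = (a.trans ⟦ξ⟧).trans ⟦ξ.symm⟧ := by
    simp [Path.Homotopic.Quotient.trans_assoc]
  calc whiskerDist (a.trans ⟦ξ⟧) a ≤ Metric.diam (range ξ.symm) := whiskerDist_le_diam hback
    _ = Metric.diam (range ξ) := by rw [Path.symm_range]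
    _ ≤ whiskerDist a (a.trans ⟦ξ⟧) + θ := hξ.le

theorem whiskerDist_comm (a b : Path.Homotopic.Quotient y₀ y₀) :
    whiskerDist a b = whiskerDist b a :=
  le_antisymm (whiskerDist_comm_le b a) (whiskerDist_comm_le a b)

theorem whiskerDist_triangle (a b c : Path.Homotopic.Quotient y₀ y₀) :
    whiskerDist a c ≤ whiskerDist a b + whiskerDist b c := by
  refine le_of_forall_pos_le_add fun θ hθ => ?_
  obtain ⟨ξ₁, rfl, hξ₁⟩ :=
    exists_diam_lt_of_whiskerDist_lt (lt_add_of_pos_right (whiskerDist a b) (half_pos hθ))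
  obtain ⟨ξ₂, rfl, hξ₂⟩ := exists_diam_lt_of_whiskerDist_lt
    (lt_add_of_pos_right (whiskerDist (a.trans ⟦ξ₁⟧) c) (half_pos hθ))
  have hcomp : (a.trans ⟦ξ₁⟧).trans ⟦ξ₂⟧ = a.trans ⟦ξ₁.trans ξ₂⟧ :=
    Path.Homotopic.Quotient.trans_assoc _ _ _
  have hmeet : (range ξ₁ ∩ range ξ₂).Nonempty := ⟨y₀, ⟨0, ξ₁.source⟩, ⟨0, ξ₂.source⟩⟩
  calc whiskerDist a ((a.trans ⟦ξ₁⟧).trans ⟦ξ₂⟧)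
      ≤ Metric.diam (range ξ₁ ∪ range ξ₂) := by
        rw [← Path.trans_range]; exact whiskerDist_le_diam hcomp
    _ ≤ Metric.diam (range ξ₁) + Metric.diam (range ξ₂) := Metric.diam_union' hmeet
    _ ≤ _ := by linarith

variable (y₀) in
noncomputable abbrev whiskerPseudoMetricSpace :
    PseudoMetricSpace (Path.Homotopic.Quotient y₀ y₀) where
  dist := whiskerDist
  dist_self := whiskerDist_self
  dist_comm := whiskerDist_comm
  dist_triangle := whiskerDist_triangle

theorem range_subset_ball_of_diam_lt {ξ : Path y₀ y₀} {ε : ℝ}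
    (hξ : Metric.diam (range ξ) < ε) : range ξ ⊆ Metric.ball y₀ ε := by
  rintro _ ⟨t, rfl⟩
  exact (Metric.dist_le_diam_of_mem (isCompact_range ξ.continuous).isBounded
    ⟨t, rfl⟩ ⟨0, ξ.source⟩).trans_lt hξ

theorem whiskerDist_lt_subset_whiskerB (b : Path.Homotopic.Quotient y₀ y₀) (ε : ℝ) :
    {c | whiskerDist b c < ε} ⊆ whiskerB b (Metric.ball y₀ ε) := by
  intro c hc
  obtain ⟨ξ, rfl, hξ⟩ := exists_diam_lt_of_whiskerDist_lt hc
  exact ⟨ξ, range_subset_ball_of_diam_lt hξ, rfl⟩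

theorem whiskerB_ball_subset_whiskerDist_lt (b : Path.Homotopic.Quotient y₀ y₀) {ε : ℝ}
    (hε : 0 < ε) : whiskerB b (Metric.ball y₀ (ε / 3)) ⊆ {c | whiskerDist b c < ε} := by
  rintro _ ⟨η, hη, rfl⟩
  have hdiam : Metric.diam (range η) ≤ 2 * (ε / 3) :=
    (Metric.diam_mono hη Metric.isBounded_ball).trans (Metric.diam_ball (by positivity))
  have hdist : whiskerDist b (b.trans ⟦η⟧) ≤ Metric.diam (range η) := whiskerDist_le_diam rfl
  show whiskerDist b _ < ε
  linarith

variable (y₀) in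
theorem whiskerPseudoMetricSpace_topology :
    (whiskerPseudoMetricSpace y₀).toUniformSpace.toTopologicalSpace = whiskerTopology y₀ := by
  let := whiskerPseudoMetricSpace y₀
  apply le_antisymm
  · refine le_generateFrom ?_
    rintro _ ⟨ζ, U, hU, hy₀, rfl⟩
    refine Metric.isOpen_iff.mpr fun b hb => ?_
    obtain ⟨ε, hε, hεU⟩ := Metric.isOpen_iff.mp hU y₀ hy₀
    refine ⟨ε, hε, fun c hc => ?_⟩
    exact whiskerB_subset_of_mem hb (whiskerB_mono b hεU
      (whiskerDist_lt_subset_whiskerB b ε (Metric.mem_ball'.mp hc)))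
  · intro s hs
    refine (@isOpen_iff_forall_mem_open _ (whiskerTopology y₀) s).mpr fun b hb => ?_
    obtain ⟨ε, hε, hεs⟩ := Metric.isOpen_iff.mp hs b hb
    refine ⟨whiskerB b (Metric.ball y₀ (ε / 3)), fun c hc => hεs ?_,
      isOpen_whiskerB b Metric.isOpen_ball (Metric.mem_ball_self (by positivity)),
      mem_whiskerB_self b (Metric.mem_ball_self (by positivity))⟩
    exact Metric.mem_ball'.mpr (whiskerB_ball_subset_whiskerDist_lt b hε hc)

end Metric

/-- The topology induced by the pseudometric `ρ` on `π₁(X, x₀)` (generated by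
the open `ρ`-balls) coincides with the whisker topology; consequently, when `X` is
metrizable, `π₁^wh(X, x₀)` is pseudometrizable. -/
theorem whiskerDist_induces_whiskerTopology {X : Type u} [MetricSpace X] (x₀ : X) :
    whiskerTopology x₀ = TopologicalSpace.generateFrom
      {S : Set (Path.Homotopic.Quotient x₀ x₀) |
        ∃ (a : Path.Homotopic.Quotient x₀ x₀) (ε : ℝ), 0 < ε ∧
          S = {b | whiskerDist a b < ε}} ∧
    ∃ m : PseudoMetricSpace (Path.Homotopic.Quotient x₀ x₀),
      m.toUniformSpace.toTopologicalSpace = whiskerTopology x₀ := by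
  refine ⟨?_, _, whiskerPseudoMetricSpace_topology x₀⟩
  rw [← whiskerPseudoMetricSpace_topology]
  exact @Metric.topology_eq_generateFrom_dist_lt _ (whiskerPseudoMetricSpace x₀)
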